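/- Assume the Setup (Section 2) with conditions (sing), (main0), (main1), (xxnxxn1): sup_{n≥0} ‖X_n‖‖X_n⁻¹‖ < ∞, and suppose T is power bounded (sup_m ‖T^m‖ < ∞). Then sup_{n≥0} ‖Q_n‖ < ∞. -/

import Mathlib

noncomputable section
set_option linter.unusedSectionVars false
open scoped ENNReal InnerProductSpace
open ContinuousLinearMap

section AuxiliaryLemmas
set_option maxHeartbeats 1000000
open Filter Topology

/-- limit of a bounded complex sequence along an ultrafilter -/
def ulim (𝒰 : Ultrafilter ℕ) (u : ℕ → ℂ) : ℂ := limUnder (𝒰 : Filter ℕ) u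

lemma tendsto_ulim (𝒰 : Ultrafilter ℕ) (u : ℕ → ℂ) (C : ℝ) (hC : ∀ M, ‖u M‖ ≤ C) :
    Filter.Tendsto u 𝒰 (𝓝 (ulim 𝒰 u)) := by
  apply tendsto_nhds_limUnder
  have hcompact : IsCompact (Metric.closedBall (0 : ℂ) C) := isCompact_closedBall _ _
  have hle : ↑(𝒰.map u) ≤ Filter.principal (Metric.closedBall (0 : ℂ) C) := by
    rw [Ultrafilter.coe_map, Filter.le_principal_iff, Filter.mem_map]
    have h1 : ∀ M, u M ∈ Metric.closedBall (0 : ℂ) C := by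
      intro M
      simpa [Metric.mem_closedBall, dist_eq_norm] using hC M
    exact Filter.univ_mem' h1
  obtain ⟨c, -, hc⟩ := hcompact.ultrafilter_le_nhds (𝒰.map u) hle
  exact ⟨c, hc⟩

open InnerProductSpace in
lemma exists_clm_of_sesq {K1 K2 : Type} [NormedAddCommGroup K1] [InnerProductSpace ℂ K1]
    [NormedAddCommGroup K2] [InnerProductSpace ℂ K2] [CompleteSpace K2]
    (f : K1 → K2 → ℂ) (C : ℝ) (hC : 0 ≤ C)
    (hadd1 : ∀ a a' b, f (a + a') b = f a b + f a' b)
    (hsmul1 : ∀ (c : ℂ) a b, f (c • a) b = (starRingEnd ℂ) c * f a b)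
    (hadd2 : ∀ a b b', f a (b + b') = f a b + f a b')
    (hsmul2 : ∀ a (c : ℂ) b, f a (c • b) = c * f a b)
    (hbound : ∀ a b, ‖f a b‖ ≤ C * ‖a‖ * ‖b‖) :
    ∃ Z : K1 →L[ℂ] K2, ∀ a b, ⟪Z a, b⟫_ℂ = f a b := by
  have hCa : ∀ a : K1, 0 ≤ C * ‖a‖ := fun a => mul_nonneg hC (norm_nonneg a)
  let φ : K1 → (K2 →L[ℂ] ℂ) := fun a => LinearMap.mkContinuous
    { toFun := f a, map_add' := hadd2 a, map_smul' := fun c b => hsmul2 a c b } (C * ‖a‖)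
    (fun b => by simpa [mul_assoc] using hbound a b)
  have hφ : ∀ a b, φ a b = f a b := fun a b => rfl
  let w : K1 → K2 := fun a => (toDual ℂ K2).symm (φ a)
  have hw : ∀ a b, ⟪w a, b⟫_ℂ = f a b := fun a b => toDual_symm_apply
  have hwadd : ∀ a a', w (a + a') = w a + w a' := by
    intro a a'
    refine ext_inner_right ℂ fun b => ?_
    rw [hw, hadd1, inner_add_left, hw, hw]
  have hwsmul : ∀ (c : ℂ) (a : K1), w (c • a) = c • w a := by
    intro c a
    refine ext_inner_right ℂ fun b => ?_
    rw [hw, hsmul1, inner_smul_left, hw]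
  have hwb : ∀ a, ‖w a‖ ≤ C * ‖a‖ := by
    intro a
    have h1 : ‖w a‖ = ‖φ a‖ := (toDual ℂ K2).symm.norm_map (φ a)
    rw [h1]
    exact LinearMap.mkContinuous_norm_le _ (hCa a) _
  refine ⟨LinearMap.mkContinuous ⟨⟨w, fun a a' => hwadd a a'⟩, fun c a => hwsmul c a⟩ C ?_, ?_⟩
  · exact fun a => hwb a
  · exact hw

end AuxiliaryLemmas

set_option maxHeartbeats 1000000
open Filter Topology


/-- A bounded operator `V` is an isometry. -/
def IsIsometryOp {K : Type} [NormedAddCommGroup K] [InnerProductSpace ℂ K]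
    (V : K →L[ℂ] K) : Prop :=
  ∀ x, ‖V x‖ = ‖x‖

/-- A bounded operator `V` is unitary: an isometry onto. -/
def IsUnitaryOp {K : Type} [NormedAddCommGroup K] [InnerProductSpace ℂ K]
    (V : K →L[ℂ] K) : Prop :=
  (∀ x, ‖V x‖ = ‖x‖) ∧ Function.Surjective V

/-- Lemma 2.7: if `T` is power bounded and (xxnxxn1) holds, then (qqn) holds:
the skew projections `Q_n` are uniformly bounded. -/
theorem skew_projections_uniformly_bounded_of_power_bounded
    {H : Type} [NormedAddCommGroup H] [InnerProductSpace ℂ H] [CompleteSpace H]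
    [TopologicalSpace.SeparableSpace H]
    (K0 : ℕ → Type) [∀ n, NormedAddCommGroup (K0 n)] [∀ n, InnerProductSpace ℂ (K0 n)]
    [∀ n, CompleteSpace (K0 n)] [∀ n, TopologicalSpace.SeparableSpace (K0 n)]
    -- the unitaries `U_{0n}`, each reductive, with pairwise singular spectral measures:
    (U0 : ∀ n, K0 n →L[ℂ] K0 n)
    (hU0 : ∀ n, IsUnitaryOp (U0 n))
    (hU0red : ∀ (n) (F : Submodule ℂ (K0 n)), IsClosed (F : Set (K0 n)) →
      (∀ x ∈ F, U0 n x ∈ F) → ∀ x ∈ F, ContinuousLinearMap.adjoint (U0 n) x ∈ F)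
    (hsing : ∀ n k, n ≠ k → ∀ Z : K0 n →L[ℂ] K0 k, Z.comp (U0 n) = (U0 k).comp Z → Z = 0)
    (T : H →L[ℂ] H)
    -- the nonzero closed `T`-invariant subspaces `H_n`:
    (Hn : ℕ → Submodule ℂ H)
    (hHcl : ∀ n, IsClosed ((Hn n : Set H)))
    (hHne : ∀ n, Hn n ≠ ⊥)
    (hTH : ∀ n, ∀ x ∈ Hn n, T x ∈ Hn n)
    -- `Vn n = ⋁_{k ≠ n} H_k`:
    (Vn : ℕ → Submodule ℂ H)
    (hVn : ∀ n, Vn n = (⨆ k ∈ {k : ℕ | k ≠ n}, Hn k).topologicalClosure)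
    -- (main0):
    (hmain0 : ∀ n, Hn n ⊓ Vn n = ⊥ ∧ Hn n ⊔ Vn n = ⊤)
    -- (main1): the invertible intertwiners `X_n : H_n → K_{0n}`:
    (X0 : ∀ n, ↥(Hn n) ≃L[ℂ] K0 n)
    (hX0 : ∀ (n) (x : ↥(Hn n)), X0 n ⟨T ↑x, hTH n ↑x x.2⟩ = U0 n (X0 n x))
    -- the skew projections `Q_n` onto `H_n` along `⋁_{k ≠ n} H_k`:
    (Q : ℕ → H →L[ℂ] H)
    (hQmem : ∀ n x, Q n x ∈ Hn n)
    (hQid : ∀ n, ∀ x ∈ Hn n, Q n x = x)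
    (hQker : ∀ n, ∀ x ∈ Vn n, Q n x = 0)
    -- (xxnxxn1):
    (hXX : ∃ C : ℝ, ∀ n,
      ‖(X0 n : ↥(Hn n) →L[ℂ] K0 n)‖ * ‖((X0 n).symm : K0 n →L[ℂ] ↥(Hn n))‖ ≤ C)
    -- `T` is power bounded:
    (hpb : ∃ C : ℝ, ∀ m : ℕ, ‖T ^ m‖ ≤ C) :
    ∃ C : ℝ, ∀ n, ‖Q n‖ ≤ C := by
  classical
  obtain ⟨CX, hCX⟩ := hXX
  obtain ⟨CT, hCT⟩ := hpb
  have hCT0 : 0 ≤ CT := le_trans (norm_nonneg _) (hCT 0)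
  have hCX0 : 0 ≤ CX := by
    have := hCX 0
    have h0 : (0:ℝ) ≤ ‖(X0 0 : ↥(Hn 0) →L[ℂ] K0 0)‖ * ‖((X0 0).symm : K0 0 →L[ℂ] ↥(Hn 0))‖ :=
      mul_nonneg (opNorm_nonneg _) (opNorm_nonneg _)
    linarith
  set 𝒰 : Ultrafilter ℕ := Ultrafilter.of Filter.atTop with h𝒰def
  have h𝒰 : (𝒰 : Filter ℕ) ≤ Filter.atTop := Ultrafilter.of_le _
  -- power intertwining
  have hTpow : ∀ (j m : ℕ), ∀ v ∈ Hn j, (T ^ m) v ∈ Hn j := by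
    intro j m
    induction m with
    | zero => intro v hv; simpa using hv
    | succ m ih =>
        intro v hv
        rw [pow_succ, ContinuousLinearMap.mul_apply]
        exact ih _ (hTH j v hv)
  have hXpow : ∀ (j m : ℕ) (v : ↥(Hn j)) (h : (T ^ m) (v : H) ∈ Hn j),
      X0 j ⟨(T ^ m) (v : H), h⟩ = ((U0 j) ^ m) (X0 j v) := by
    intro j m
    induction m with
    | zero =>
        intro v h
        have hv : (⟨(T ^ 0) (v : H), h⟩ : ↥(Hn j)) = v := Subtype.ext (by simp)
        rw [hv]; simp
    | succ m ih =>
        intro v h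
        have e1 : (T ^ (m + 1)) (v : H) = (T ^ m) (T (v : H)) := by
          rw [pow_succ, ContinuousLinearMap.mul_apply]
        set v' : ↥(Hn j) := ⟨T (v : H), hTH j (v : H) v.2⟩ with hv'
        have h' : (T ^ m) ((v' : H)) ∈ Hn j := by rw [hv']; exact e1 ▸ h
        have e2 : (⟨(T ^ (m + 1)) (v : H), h⟩ : ↥(Hn j)) = ⟨(T ^ m) ((v' : H)), h'⟩ :=
          Subtype.ext e1
        rw [e2, ih v' h', show X0 j v' = U0 j (X0 j v) from hX0 j v,
          ← ContinuousLinearMap.mul_apply, ← pow_succ]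
  have hUiso : ∀ (j m : ℕ) (a : K0 j), ‖((U0 j) ^ m) a‖ = ‖a‖ := by
    intro j m
    induction m with
    | zero => intro a; simp
    | succ m ih =>
        intro a
        rw [pow_succ, ContinuousLinearMap.mul_apply, ih]
        exact (hU0 j).1 a
  have hTm : ∀ (m : ℕ) (v : H), ‖(T ^ m) v‖ ≤ CT * ‖v‖ := fun m v =>
    le_trans ((T ^ m).le_opNorm v)
      (mul_le_mul_of_nonneg_right (hCT m) (norm_nonneg v))
  -- lower bound for vectors in Hn j
  have hlow : ∀ (j m : ℕ) (v : ↥(Hn j)), ‖(v : H)‖ ≤ CX * ‖(T ^ m) (v : H)‖ := by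
    intro j m v
    have h1 : ‖v‖ ≤ ‖((X0 j).symm : K0 j →L[ℂ] ↥(Hn j))‖ * ‖X0 j v‖ := by
      conv_lhs => rw [← (X0 j).symm_apply_apply v]
      exact le_opNorm ((X0 j).symm : K0 j →L[ℂ] ↥(Hn j)) (X0 j v)
    have h2 : ‖X0 j v‖ = ‖X0 j (⟨(T ^ m) (v : H), hTpow j m v v.2⟩ : ↥(Hn j))‖ := by
      rw [hXpow j m v (hTpow j m v v.2), hUiso]
    have h3 : ‖X0 j (⟨(T ^ m) (v : H), hTpow j m v v.2⟩ : ↥(Hn j))‖ ≤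
        ‖(X0 j : ↥(Hn j) →L[ℂ] K0 j)‖ * ‖(T ^ m) (v : H)‖ :=
      le_opNorm (X0 j : ↥(Hn j) →L[ℂ] K0 j) _
    have h4 : ‖(v : H)‖ = ‖v‖ := rfl
    have h5 : ‖(X0 j : ↥(Hn j) →L[ℂ] K0 j)‖ * ‖((X0 j).symm : K0 j →L[ℂ] ↥(Hn j))‖ ≤ CX :=
      hCX j
    have h6 : (0:ℝ) ≤ ‖(T ^ m) (v : H)‖ := norm_nonneg _
    have h7 : (0:ℝ) ≤ ‖((X0 j).symm : K0 j →L[ℂ] ↥(Hn j))‖ := opNorm_nonneg _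
    nlinarith [opNorm_nonneg (X0 j : ↥(Hn j) →L[ℂ] K0 j), norm_nonneg (X0 j v)]
  -- the averaged correlation sequence
  set Av : H → H → ℕ → ℂ := fun y z M =>
    (((M + 1 : ℝ)⁻¹ : ℝ) : ℂ) * ∑ m ∈ Finset.range (M + 1), ⟪(T ^ m) y, (T ^ m) z⟫_ℂ
    with hAvdef
  have hAvBound : ∀ (y z : H) (M : ℕ), ‖Av y z M‖ ≤ (CT * ‖y‖) * (CT * ‖z‖) := by
    intro y z M
    have hterm : ∀ m ∈ Finset.range (M + 1),
        ‖⟪(T ^ m) y, (T ^ m) z⟫_ℂ‖ ≤ (CT * ‖y‖) * (CT * ‖z‖) := by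
      intro m _
      refine le_trans (norm_inner_le_norm _ _) ?_
      exact mul_le_mul (hTm m y) (hTm m z) (norm_nonneg _)
        (mul_nonneg hCT0 (norm_nonneg _))
    calc ‖Av y z M‖ ≤ ((M + 1 : ℝ)⁻¹) * ∑ m ∈ Finset.range (M + 1),
          ‖⟪(T ^ m) y, (T ^ m) z⟫_ℂ‖ := by
          rw [hAvdef]
          simp only [norm_mul, Complex.norm_real, Real.norm_eq_abs]
          rw [abs_of_nonneg (by positivity)]
          exact mul_le_mul_of_nonneg_left (norm_sum_le _ _) (by positivity)
      _ ≤ ((M + 1 : ℝ)⁻¹) * ((M + 1 : ℝ) * ((CT * ‖y‖) * (CT * ‖z‖))) := by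
          refine mul_le_mul_of_nonneg_left ?_ (by positivity)
          calc ∑ m ∈ Finset.range (M + 1), ‖⟪(T ^ m) y, (T ^ m) z⟫_ℂ‖
              ≤ ∑ _m ∈ Finset.range (M + 1), (CT * ‖y‖) * (CT * ‖z‖) :=
                Finset.sum_le_sum hterm
            _ = (M + 1 : ℝ) * ((CT * ‖y‖) * (CT * ‖z‖)) := by
                rw [Finset.sum_const, Finset.card_range]; push_cast; ring
      _ = (CT * ‖y‖) * (CT * ‖z‖) := by field_simp
  have hAvAdd : ∀ (y z z' : H) (M : ℕ), Av y (z + z') M = Av y z M + Av y z' M := by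
    intro y z z' M
    rw [hAvdef]
    simp only [map_add, inner_add_right, Finset.sum_add_distrib, mul_add]
  -- main goal
  refine ⟨CX * CT, fun n => ?_⟩
  refine ContinuousLinearMap.opNorm_le_bound _ (mul_nonneg hCX0 hCT0) fun x => ?_
  have hxmem : x ∈ Hn n ⊔ Vn n := by rw [(hmain0 n).2]; trivial
  obtain ⟨y, hy, z, hz, hxyz⟩ := Submodule.mem_sup.mp hxmem
  have hQx : Q n x = y := by
    rw [← hxyz, map_add, hQid n y hy, hQker n z hz, add_zero]
  rw [hQx]
  -- cross term vanishes for w in Hn k, k ≠ n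
  have hbase : ∀ k, k ≠ n → ∀ w ∈ Hn k, Filter.Tendsto (Av y w) 𝒰 (𝓝 0) := by
    intro k hk w hw
    set yS : ↥(Hn n) := ⟨y, hy⟩ with hyS
    set wS : ↥(Hn k) := ⟨w, hw⟩ with hwS
    set F : K0 n → K0 k → ℕ → ℂ := fun a b m =>
      ⟪(((X0 n).symm (((U0 n) ^ m) a) : ↥(Hn n)) : H),
        (((X0 k).symm (((U0 k) ^ m) b) : ↥(Hn k)) : H)⟫_ℂ with hF
    set A : K0 n → K0 k → ℕ → ℂ := fun a b M =>
      (((M + 1 : ℝ)⁻¹ : ℝ) : ℂ) * ∑ m ∈ Finset.range (M + 1), F a b m with hA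
    set C0 : ℝ := ‖((X0 n).symm : K0 n →L[ℂ] ↥(Hn n))‖ *
      ‖((X0 k).symm : K0 k →L[ℂ] ↥(Hn k))‖ with hC0
    have hC00 : 0 ≤ C0 := mul_nonneg (opNorm_nonneg _) (opNorm_nonneg _)
    have hFbound : ∀ a b m, ‖F a b m‖ ≤ C0 * ‖a‖ * ‖b‖ := by
      intro a b m
      refine le_trans (norm_inner_le_norm _ _) ?_
      have e1 : ‖(((X0 n).symm (((U0 n) ^ m) a) : ↥(Hn n)) : H)‖ ≤
          ‖((X0 n).symm : K0 n →L[ℂ] ↥(Hn n))‖ * ‖a‖ := by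
        have := le_opNorm ((X0 n).symm : K0 n →L[ℂ] ↥(Hn n)) (((U0 n) ^ m) a)
        rw [hUiso n m a] at this
        exact this
      have e2 : ‖(((X0 k).symm (((U0 k) ^ m) b) : ↥(Hn k)) : H)‖ ≤
          ‖((X0 k).symm : K0 k →L[ℂ] ↥(Hn k))‖ * ‖b‖ := by
        have := le_opNorm ((X0 k).symm : K0 k →L[ℂ] ↥(Hn k)) (((U0 k) ^ m) b)
        rw [hUiso k m b] at this
        exact this
      calc ‖(((X0 n).symm (((U0 n) ^ m) a) : ↥(Hn n)) : H)‖ *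
            ‖(((X0 k).symm (((U0 k) ^ m) b) : ↥(Hn k)) : H)‖
          ≤ (‖((X0 n).symm : K0 n →L[ℂ] ↥(Hn n))‖ * ‖a‖) *
            (‖((X0 k).symm : K0 k →L[ℂ] ↥(Hn k))‖ * ‖b‖) :=
            mul_le_mul e1 e2 (norm_nonneg _)
              (mul_nonneg (opNorm_nonneg _) (norm_nonneg _))
        _ = C0 * ‖a‖ * ‖b‖ := by rw [hC0]; ring
    have hAbound : ∀ a b M, ‖A a b M‖ ≤ C0 * ‖a‖ * ‖b‖ := by
      intro a b M
      rw [hA]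
      simp only [norm_mul, Complex.norm_real, Real.norm_eq_abs]
      rw [abs_of_nonneg (by positivity : (0:ℝ) ≤ ((M:ℝ) + 1)⁻¹)]
      calc ((M:ℝ) + 1)⁻¹ * ‖∑ m ∈ Finset.range (M + 1), F a b m‖
          ≤ ((M:ℝ) + 1)⁻¹ * ((M + 1 : ℝ) * (C0 * ‖a‖ * ‖b‖)) := by
            refine mul_le_mul_of_nonneg_left ?_ (by positivity)
            refine le_trans (norm_sum_le _ _) ?_
            calc ∑ m ∈ Finset.range (M + 1), ‖F a b m‖
                ≤ ∑ _m ∈ Finset.range (M + 1), (C0 * ‖a‖ * ‖b‖) :=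
                  Finset.sum_le_sum fun m _ => hFbound a b m
              _ = (M + 1 : ℝ) * (C0 * ‖a‖ * ‖b‖) := by
                  rw [Finset.sum_const, Finset.card_range]; push_cast; ring
        _ = C0 * ‖a‖ * ‖b‖ := by field_simp
    -- ultrafilter limit of the averages
    set f : K0 n → K0 k → ℂ := fun a b => ulim 𝒰 (A a b) with hf
    have hft : ∀ a b, Filter.Tendsto (A a b) 𝒰 (𝓝 (f a b)) := fun a b =>
      tendsto_ulim 𝒰 (A a b) (C0 * ‖a‖ * ‖b‖) (hAbound a b)
    have hFadd1 : ∀ a a' b m, F (a + a') b m = F a b m + F a' b m := by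
      intro a a' b m
      rw [hF]
      simp only [map_add, Submodule.coe_add, inner_add_left]
    have hFsmul1 : ∀ (c : ℂ) a b m, F (c • a) b m = (starRingEnd ℂ) c * F a b m := by
      intro c a b m
      rw [hF]
      simp only [map_smul, Submodule.coe_smul, inner_smul_left]
    have hFadd2 : ∀ a b b' m, F a (b + b') m = F a b m + F a b' m := by
      intro a b b' m
      rw [hF]
      simp only [map_add, Submodule.coe_add, inner_add_right]
    have hFsmul2 : ∀ a (c : ℂ) b m, F a (c • b) m = c * F a b m := by
      intro a c b m
      rw [hF]
      simp only [map_smul, Submodule.coe_smul, inner_smul_right]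
    have hAadd1 : ∀ a a' b M, A (a + a') b M = A a b M + A a' b M := by
      intro a a' b M
      rw [hA]
      simp only [hFadd1, Finset.sum_add_distrib, mul_add]
    have hAsmul1 : ∀ (c : ℂ) a b M, A (c • a) b M = (starRingEnd ℂ) c * A a b M := by
      intro c a b M
      simp only [hA, hFsmul1, ← Finset.mul_sum]
      ring
    have hAadd2 : ∀ a b b' M, A a (b + b') M = A a b M + A a b' M := by
      intro a b b' M
      rw [hA]
      simp only [hFadd2, Finset.sum_add_distrib, mul_add]
    have hAsmul2 : ∀ a (c : ℂ) b M, A a (c • b) M = c * A a b M := by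
      intro a c b M
      simp only [hA, hFsmul2, ← Finset.mul_sum]
      ring
    have hfadd1 : ∀ a a' b, f (a + a') b = f a b + f a' b := by
      intro a a' b
      refine tendsto_nhds_unique (hft (a + a') b) ?_
      refine Filter.Tendsto.congr (fun M => (hAadd1 a a' b M).symm)
        ((hft a b).add (hft a' b))
    have hfsmul1 : ∀ (c : ℂ) a b, f (c • a) b = (starRingEnd ℂ) c * f a b := by
      intro c a b
      refine tendsto_nhds_unique (hft (c • a) b) ?_
      refine Filter.Tendsto.congr (fun M => (hAsmul1 c a b M).symm)
        ((hft a b).const_mul _)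
    have hfadd2 : ∀ a b b', f a (b + b') = f a b + f a b' := by
      intro a b b'
      refine tendsto_nhds_unique (hft a (b + b')) ?_
      refine Filter.Tendsto.congr (fun M => (hAadd2 a b b' M).symm)
        ((hft a b).add (hft a b'))
    have hfsmul2 : ∀ a (c : ℂ) b, f a (c • b) = c * f a b := by
      intro a c b
      refine tendsto_nhds_unique (hft a (c • b)) ?_
      refine Filter.Tendsto.congr (fun M => (hAsmul2 a c b M).symm)
        ((hft a b).const_mul _)
    have hfbound : ∀ a b, ‖f a b‖ ≤ C0 * ‖a‖ * ‖b‖ := by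
      intro a b
      exact le_of_tendsto (hft a b).norm
        (Filter.Eventually.of_forall fun M => hAbound a b M)
    -- shift invariance
    have hFshift : ∀ a b m, F (U0 n a) (U0 k b) m = F a b (m + 1) := by
      intro a b m
      rw [hF]
      simp only [← ContinuousLinearMap.mul_apply, ← pow_succ]
    have hAshift : ∀ a b M, A (U0 n a) (U0 k b) M =
        A a b M + (((M + 1 : ℝ)⁻¹ : ℝ) : ℂ) * (F a b (M + 1) - F a b 0) := by
      intro a b M
      have e1 : ∑ m ∈ Finset.range (M + 1), F a b (m + 1) =
          (∑ m ∈ Finset.range (M + 1), F a b m) + F a b (M + 1) - F a b 0 := by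
        have := Finset.sum_range_succ' (F a b) (M + 1)
        have e2 := Finset.sum_range_succ (F a b) (M + 1)
        rw [e2] at this
        linear_combination -this
      calc A (U0 n a) (U0 k b) M
          = (((M + 1 : ℝ)⁻¹ : ℝ) : ℂ) * ∑ m ∈ Finset.range (M + 1), F a b (m + 1) := by
            rw [hA]; simp only [hFshift]
        _ = A a b M + (((M + 1 : ℝ)⁻¹ : ℝ) : ℂ) * (F a b (M + 1) - F a b 0) := by
            rw [e1, hA]; ring
    have hfshift : ∀ a b, f (U0 n a) (U0 k b) = f a b := by
      intro a b
      refine tendsto_nhds_unique (hft (U0 n a) (U0 k b)) ?_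
      have hzero : Filter.Tendsto
          (fun M : ℕ => (((M + 1 : ℝ)⁻¹ : ℝ) : ℂ) * (F a b (M + 1) - F a b 0))
          𝒰 (𝓝 0) := by
        refine Filter.Tendsto.mono_left ?_ h𝒰
        refine squeeze_zero_norm
          (a := fun M : ℕ => (1 / ((M:ℝ) + 1)) * (2 * (C0 * ‖a‖ * ‖b‖)))
          (fun M => ?_) ?_
        · simp only [norm_mul, Complex.norm_real, Real.norm_eq_abs]
          rw [abs_of_nonneg (by positivity : (0:ℝ) ≤ ((M:ℝ) + 1)⁻¹), one_div]
          refine mul_le_mul_of_nonneg_left ?_ (by positivity)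
          refine le_trans (norm_sub_le _ _) ?_
          have := hFbound a b (M + 1)
          have := hFbound a b 0
          linarith
        · have h1 : Filter.Tendsto (fun M : ℕ => 1 / ((M:ℝ) + 1)) Filter.atTop (𝓝 0) :=
            tendsto_one_div_add_atTop_nhds_zero_nat
          have := h1.mul_const (2 * (C0 * ‖a‖ * ‖b‖))
          simpa using this
      have := (hft a b).add hzero
      rw [add_zero] at this
      exact Filter.Tendsto.congr (fun M => (hAshift a b M).symm) this
    -- build the intertwiner and kill it
    obtain ⟨Z, hZ⟩ := exists_clm_of_sesq f C0 hC00 hfadd1 hfsmul1 hfadd2 hfsmul2 hfbound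
    have hZcomm : ∀ a, Z (U0 n a) = U0 k (Z a) := by
      intro a
      refine ext_inner_right ℂ fun c => ?_
      obtain ⟨b, rfl⟩ := (hU0 k).2 c
      have Ui : K0 k →ₗᵢ[ℂ] K0 k :=
        ⟨(U0 k : K0 k →ₗ[ℂ] K0 k), (hU0 k).1⟩
      have him : ⟪U0 k (Z a), U0 k b⟫_ℂ = ⟪Z a, b⟫_ℂ :=
        LinearIsometry.inner_map_map ⟨(U0 k : K0 k →ₗ[ℂ] K0 k), (hU0 k).1⟩ (Z a) b
      rw [hZ (U0 n a) (U0 k b), hfshift a b, him, hZ a b]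
    have hZ0 : Z = 0 := by
      refine hsing n k (fun h => hk h.symm) Z ?_
      ext a
      simp only [ContinuousLinearMap.comp_apply]
      exact hZcomm a
    have hf0 : ∀ a b, f a b = 0 := by
      intro a b
      rw [← hZ (a) (b), hZ0]
      simp
    -- transfer back to Av
    have hrel : ∀ m (h : (T ^ m) (y : H) ∈ Hn n),
        ((X0 n).symm (((U0 n) ^ m) (X0 n yS)) : ↥(Hn n)) = ⟨(T ^ m) y, h⟩ := by
      intro m h
      rw [← hXpow n m yS h]
      exact (X0 n).symm_apply_apply _
    have hrelk : ∀ m (h : (T ^ m) (w : H) ∈ Hn k),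
        ((X0 k).symm (((U0 k) ^ m) (X0 k wS)) : ↥(Hn k)) = ⟨(T ^ m) w, h⟩ := by
      intro m h
      rw [← hXpow k m wS h]
      exact (X0 k).symm_apply_apply _
    have hAv : ∀ M, A (X0 n yS) (X0 k wS) M = Av y w M := by
      intro M
      simp only [hA, hAvdef]
      congr 1
      refine Finset.sum_congr rfl fun m _ => ?_
      simp only [hF]
      rw [hrel m (hTpow n m y hy), hrelk m (hTpow k m w hw)]
    have := hft (X0 n yS) (X0 k wS)
    rw [hf0] at this
    exact Filter.Tendsto.congr hAv this
  -- the limit functional g on H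
  set g : H → ℂ := fun v => ulim 𝒰 (Av y v) with hg
  have hgt : ∀ v : H, Filter.Tendsto (Av y v) 𝒰 (𝓝 (g v)) := fun v =>
    tendsto_ulim 𝒰 (Av y v) ((CT * ‖y‖) * (CT * ‖v‖)) (hAvBound y v)
  have hgadd : ∀ v v' : H, g (v + v') = g v + g v' := by
    intro v v'
    refine tendsto_nhds_unique (hgt (v + v')) ?_
    exact Filter.Tendsto.congr (fun M => (hAvAdd y v v' M).symm) ((hgt v).add (hgt v'))
  have hgbound : ∀ v : H, ‖g v‖ ≤ (CT * ‖y‖) * (CT * ‖v‖) := fun v =>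
    le_of_tendsto (hgt v).norm (Filter.Eventually.of_forall fun M => hAvBound y v M)
  have hg0mem : ∀ v ∈ (⨆ k ∈ {k : ℕ | k ≠ n}, Hn k), g v = 0 := by
    intro v hv
    refine Submodule.iSup_induction
      (fun k : ℕ => ⨆ (_ : k ∈ {k : ℕ | k ≠ n}), Hn k) (motive := fun v => g v = 0) hv ?_ ?_ ?_
    · intro k v' hv'
      by_cases hk : k ∈ {k : ℕ | k ≠ n}
      · have hle : (⨆ (_ : k ∈ {k : ℕ | k ≠ n}), Hn k) ≤ Hn k :=
          iSup_le fun _ => le_rfl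
        exact tendsto_nhds_unique (hgt v') (hbase k hk v' (hle hv'))
      · have hle : (⨆ (_ : k ∈ {k : ℕ | k ≠ n}), Hn k) ≤ ⊥ :=
          iSup_le fun h => absurd h hk
        have : v' = 0 := by simpa using hle hv'
        subst this
        refine tendsto_nhds_unique (hgt 0) ?_
        have : ∀ M, Av y 0 M = 0 := by
          intro M
          rw [hAvdef]
          simp
        exact Filter.Tendsto.congr (fun M => (this M).symm) tendsto_const_nhds
    · refine tendsto_nhds_unique (hgt 0) ?_
      have : ∀ M, Av y 0 M = 0 := by
        intro M
        rw [hAvdef]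
        simp
      exact Filter.Tendsto.congr (fun M => (this M).symm) tendsto_const_nhds
    · intro v1 v2 h1 h2
      rw [hgadd v1 v2, h1, h2, add_zero]
  have hgz : g z = 0 := by
    have hzk : z ∈ closure ((⨆ k ∈ {k : ℕ | k ≠ n}, Hn k : Submodule ℂ H) : Set H) := by
      have := hz
      rw [hVn n] at this
      rwa [← Submodule.topologicalClosure_coe]
    by_contra hne
    have hpos : 0 < ‖g z‖ := by
      rcases lt_or_eq_of_le (norm_nonneg (g z)) with h | h
      · exact h
      · exact absurd (norm_eq_zero.mp h.symm) hne
    set D : ℝ := (CT * ‖y‖) * CT with hD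
    have hD0 : 0 ≤ D := by positivity
    set ε : ℝ := ‖g z‖ / (D + 1) with hε
    have hε0 : 0 < ε := div_pos hpos (by linarith)
    obtain ⟨w', hw'S, hw'd⟩ := Metric.mem_closure_iff.mp hzk ε hε0
    have hsplit : g z = g (z - w') + g w' := by
      rw [← hgadd]
      congr 1
      abel
    have hgw' : g w' = 0 := hg0mem w' hw'S
    have hb : ‖g z‖ ≤ D * ‖z - w'‖ := by
      rw [hsplit, hgw', add_zero]
      have := hgbound (z - w')
      calc ‖g (z - w')‖ ≤ (CT * ‖y‖) * (CT * ‖z - w'‖) := this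
        _ = D * ‖z - w'‖ := by rw [hD]; ring
    have hdist : ‖z - w'‖ < ε := by rwa [← dist_eq_norm]
    have : ‖g z‖ < (D + 1) * ε := by
      calc ‖g z‖ ≤ D * ‖z - w'‖ := hb
        _ ≤ D * ε := mul_le_mul_of_nonneg_left (le_of_lt hdist) hD0
        _ < (D + 1) * ε := by nlinarith
    have hcontr : (D + 1) * ε = ‖g z‖ := by
      rw [hε]; field_simp
    linarith
  -- final inequality
  have hperm : ∀ m : ℕ, ‖y‖ ^ 2 + CX ^ 2 * (2 * (⟪(T ^ m) y, (T ^ m) z⟫_ℂ).re)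
      ≤ CX ^ 2 * (CT * ‖x‖) ^ 2 := by
    intro m
    have hTx : (T ^ m) x = (T ^ m) y + (T ^ m) z := by rw [← hxyz, map_add]
    have hsq : ‖(T ^ m) x‖ ^ 2 = ‖(T ^ m) y‖ ^ 2 +
        2 * (⟪(T ^ m) y, (T ^ m) z⟫_ℂ).re + ‖(T ^ m) z‖ ^ 2 := by
      rw [hTx]
      have := norm_add_sq (𝕜 := ℂ) ((T ^ m) y) ((T ^ m) z)
      simpa using this
    have hylow : ‖y‖ ≤ CX * ‖(T ^ m) y‖ := hlow n m ⟨y, hy⟩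
    have hysq : ‖y‖ ^ 2 ≤ CX ^ 2 * ‖(T ^ m) y‖ ^ 2 := by nlinarith [norm_nonneg y]
    have hxup : ‖(T ^ m) x‖ ≤ CT * ‖x‖ := hTm m x
    have hxsq : ‖(T ^ m) x‖ ^ 2 ≤ (CT * ‖x‖) ^ 2 := by
      nlinarith [norm_nonneg ((T ^ m) x)]
    nlinarith [sq_nonneg CX, norm_nonneg ((T ^ m) z), sq_nonneg ‖(T ^ m) z‖,
      mul_nonneg (sq_nonneg CX) (sq_nonneg ‖(T ^ m) z‖)]
  have hAvre : ∀ M : ℕ, (Av y z M).re =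
      ((M:ℝ) + 1)⁻¹ * ∑ m ∈ Finset.range (M + 1), (⟪(T ^ m) y, (T ^ m) z⟫_ℂ).re := by
    intro M
    simp only [hAvdef]
    rw [Complex.re_ofReal_mul, Complex.re_sum]
  have havgle : ∀ M : ℕ, ‖y‖ ^ 2 + CX ^ 2 * (2 * (Av y z M).re)
      ≤ CX ^ 2 * (CT * ‖x‖) ^ 2 := by
    intro M
    have hM1 : (0:ℝ) < (M:ℝ) + 1 := by positivity
    have hsum : ∑ m ∈ Finset.range (M + 1),
        (‖y‖ ^ 2 + CX ^ 2 * (2 * (⟪(T ^ m) y, (T ^ m) z⟫_ℂ).re))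
        ≤ ((M:ℝ) + 1) * (CX ^ 2 * (CT * ‖x‖) ^ 2) := by
      calc ∑ m ∈ Finset.range (M + 1),
            (‖y‖ ^ 2 + CX ^ 2 * (2 * (⟪(T ^ m) y, (T ^ m) z⟫_ℂ).re))
          ≤ ∑ _m ∈ Finset.range (M + 1), CX ^ 2 * (CT * ‖x‖) ^ 2 :=
            Finset.sum_le_sum fun m _ => hperm m
        _ = ((M:ℝ) + 1) * (CX ^ 2 * (CT * ‖x‖) ^ 2) := by
            rw [Finset.sum_const, Finset.card_range]; push_cast; ring
    have hexp : ∑ m ∈ Finset.range (M + 1),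
        (‖y‖ ^ 2 + CX ^ 2 * (2 * (⟪(T ^ m) y, (T ^ m) z⟫_ℂ).re))
        = ((M:ℝ) + 1) * ‖y‖ ^ 2 + CX ^ 2 * 2 *
          ∑ m ∈ Finset.range (M + 1), (⟪(T ^ m) y, (T ^ m) z⟫_ℂ).re := by
      have hbody : ∀ m ∈ Finset.range (M + 1),
          CX ^ 2 * (2 * (⟪(T ^ m) y, (T ^ m) z⟫_ℂ).re)
          = (CX ^ 2 * 2) * (⟪(T ^ m) y, (T ^ m) z⟫_ℂ).re := by
        intro m _; ring
      rw [Finset.sum_add_distrib, Finset.sum_const, Finset.card_range,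
        Finset.sum_congr rfl hbody, ← Finset.mul_sum]
      push_cast; ring
    rw [hexp] at hsum
    have := mul_le_mul_of_nonneg_left hsum (le_of_lt (inv_pos.mpr hM1))
    rw [hAvre M]
    have hinv : ((M:ℝ) + 1)⁻¹ * (((M:ℝ) + 1) * ‖y‖ ^ 2) = ‖y‖ ^ 2 := by field_simp
    have hinv2 : ((M:ℝ) + 1)⁻¹ * (((M:ℝ) + 1) * (CX ^ 2 * (CT * ‖x‖) ^ 2))
        = CX ^ 2 * (CT * ‖x‖) ^ 2 := by field_simp
    calc ‖y‖ ^ 2 + CX ^ 2 * (2 * (((M:ℝ) + 1)⁻¹ *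
          ∑ m ∈ Finset.range (M + 1), (⟪(T ^ m) y, (T ^ m) z⟫_ℂ).re))
        = ((M:ℝ) + 1)⁻¹ * (((M:ℝ) + 1) * ‖y‖ ^ 2 + CX ^ 2 * 2 *
          ∑ m ∈ Finset.range (M + 1), (⟪(T ^ m) y, (T ^ m) z⟫_ℂ).re) := by
          field_simp
      _ ≤ ((M:ℝ) + 1)⁻¹ * (((M:ℝ) + 1) * (CX ^ 2 * (CT * ‖x‖) ^ 2)) := this
      _ = CX ^ 2 * (CT * ‖x‖) ^ 2 := hinv2
  have hlim : Filter.Tendsto (fun M => ‖y‖ ^ 2 + CX ^ 2 * (2 * (Av y z M).re)) 𝒰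
      (𝓝 (‖y‖ ^ 2 + CX ^ 2 * (2 * (g z).re))) := by
    have hre : Filter.Tendsto (fun M => (Av y z M).re) 𝒰 (𝓝 ((g z).re)) :=
      (Complex.continuous_re.tendsto _).comp (hgt z)
    exact tendsto_const_nhds.add (((hre.const_mul 2).const_mul (CX ^ 2)))
  have hfinal : ‖y‖ ^ 2 ≤ CX ^ 2 * (CT * ‖x‖) ^ 2 := by
    have := le_of_tendsto hlim (Filter.Eventually.of_forall havgle)
    rw [hgz] at this
    simpa using this
  have hsqrt : ‖y‖ ≤ CX * (CT * ‖x‖) := by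
    have h1 : ‖y‖ ^ 2 ≤ (CX * (CT * ‖x‖)) ^ 2 := by
      calc ‖y‖ ^ 2 ≤ CX ^ 2 * (CT * ‖x‖) ^ 2 := hfinal
        _ = (CX * (CT * ‖x‖)) ^ 2 := by ring
    have h2 : (0:ℝ) ≤ CX * (CT * ‖x‖) := by positivity
    nlinarith [norm_nonneg y]
  calc ‖y‖ ≤ CX * (CT * ‖x‖) := hsqrt
    _ = CX * CT * ‖x‖ := by ring
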